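/- For every k ≥ 0, ω((a-b)^k·b) = (a-b)^k·(b - (-y)^{k+1}·a) in ℤ[y]⟨a,b⟩. -/

import Mathlib

open Polynomial

noncomputable section

/-- The coefficient ring `ℤ[y]`. -/
abbrev NCR : Type := Polynomial ℤ

/-- The ring `ℤ[y]⟨a,b⟩` of noncommutative polynomials in the letters `a` (encoded `false`)
and `b` (encoded `true`) with coefficients in `ℤ[y]`. -/
abbrev NCPoly : Type := MonoidAlgebra NCR (FreeMonoid Bool)

/-- The variable `a`. -/
def Aa : NCPoly := MonoidAlgebra.of NCR (FreeMonoid Bool) (FreeMonoid.of false)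

/-- The variable `b`. -/
def Bb : NCPoly := MonoidAlgebra.of NCR (FreeMonoid Bool) (FreeMonoid.of true)

/-- The `ω`-transformation on a single `ab`-monomial (word in `a`,`b`): every occurrence of
the factor `ab` is replaced by `(1+y)ab + (y+y²)ba`, and then all remaining occurrences of `a`
are replaced by `a+yb` and of `b` by `b+ya`. -/
def omegaWord : List Bool → NCPoly
  | [] => 1
  | false :: true :: rest =>
      (((1 + X : NCR)) • (Aa * Bb) + ((X + X ^ 2 : NCR)) • (Bb * Aa)) * omegaWord rest
  | false :: rest => (Aa + (X : NCR) • Bb) * omegaWord rest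
  | true :: rest => (Bb + (X : NCR) • Aa) * omegaWord rest

/-- The `ω`-transformation on `ℤ[y]⟨a,b⟩`, extended linearly from `ab`-monomials. -/
def omega (f : NCPoly) : NCPoly :=
  (MonoidAlgebra.coeff f : FreeMonoid Bool →₀ NCR).sum fun w c => c • omegaWord (FreeMonoid.toList w)

/-- The `ι`-transformation on `ℤ[y]⟨a,b⟩`: it removes the initial letter from every
`ab`-monomial (and kills the empty monomial). -/
def iota (f : NCPoly) : NCPoly :=
  (MonoidAlgebra.coeff f : FreeMonoid Bool →₀ NCR).sum fun w c =>
    match FreeMonoid.toList w with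
    | [] => 0
    | _ :: rest => c • MonoidAlgebra.of NCR (FreeMonoid Bool) (FreeMonoid.ofList rest)

/-- `wt_S(a,b) = w_0 ⋯ w_{n-1}` where `w_k = b` if `k ∈ S` and `w_k = a - b` otherwise. -/
def wtS (n : ℕ) (S : Finset ℕ) : NCPoly :=
  ((List.range n).map fun j => if j ∈ S then Bb else Aa - Bb).prod

/-- Evaluation `f(y,a,b) ↦ f(-x,1,x)` used to define (augmented) Chow polynomials. -/
def evalChow (f : NCPoly) : Polynomial ℤ :=
  (MonoidAlgebra.coeff f : FreeMonoid Bool →₀ NCR).sum fun w c =>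
    c.comp (-X) * X ^ ((FreeMonoid.toList w).count true)

/-- The `ab`-monomial `m_T = m_0 ⋯ m_{n-1}` with `m_i = b` if `i ∈ T` and `m_i = a` else. -/
def mT (n : ℕ) (T : Finset ℕ) : FreeMonoid Bool :=
  FreeMonoid.ofList ((List.range n).map fun i => decide (i ∈ T))

variable {P : Type*} [Fintype P] [PartialOrder P]

open Classical in
/-- The Möbius function of a finite poset:
`μ(w,w) = 1` and `μ(u,w) = -∑_{u ≤ v < w} μ(u,v)` for `u ≠ w`. -/
def mobius (u : P) : P → ℤ
  | w =>
    if u = w then 1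
    else - ∑ v ∈ (Finset.univ.filter fun v : P => u ≤ v ∧ v < w).attach, mobius u v.1
  termination_by w => (Finset.univ.filter fun v : P => u ≤ v ∧ v ≤ w).card
  decreasing_by
    have hv := v.2
    simp only [Finset.mem_filter, Finset.mem_univ, true_and] at hv
    apply Finset.card_lt_card
    constructor
    · intro x hx
      simp only [Finset.mem_filter, Finset.mem_univ, true_and] at hx ⊢
      exact ⟨hx.1, hx.2.trans hv.2.le⟩
    · intro hsub
      have hw : w ∈ Finset.univ.filter fun v : P => u ≤ v ∧ v ≤ w := by
        simp only [Finset.mem_filter, Finset.mem_univ, true_and]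
        exact ⟨hv.1.trans hv.2.le, le_refl w⟩
      have := hsub hw
      simp only [Finset.mem_filter, Finset.mem_univ, true_and] at this
      exact absurd (lt_of_le_of_lt this.2 hv.2) (lt_irrefl w)

open Classical in
/-- The Poincaré polynomial of the interval `[u,w]`, with respect to the rank function `rk`:
`Poin_{[u,w]}(y) = ∑_{u ≤ v ≤ w} μ(u,v)·(-y)^{rk(v) - rk(u)}`. -/
def poin (rk : P → ℕ) (u w : P) : Polynomial ℤ :=
  ∑ v ∈ Finset.univ.filter fun v : P => u ≤ v ∧ v ≤ w,
    mobius u v • (-X : Polynomial ℤ) ^ (rk v - rk u)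

variable [BoundedOrder P]

open Classical in
/-- The extended `ab`-index of the interval `[u₀, ⊤]` of `P` (with ranks taken relative
to `u₀`): the sum over all chains `u₀ ≤ C_1 < ⋯ < C_k < C_{k+1} = ⊤` of
`Poin_{P,C}(y)·wt_C(a,b)`. -/
def exPsiFrom (rk : P → ℕ) (u₀ : P) : NCPoly :=
  ∑ k ∈ Finset.range (Fintype.card P),
    ∑ c ∈ Finset.univ.filter fun c : Fin (k + 1) → P =>
        StrictMono c ∧ c (Fin.last k) = (⊤ : P) ∧ u₀ ≤ c 0,
      (∏ i : Fin k, poin rk (c i.castSucc) (c i.succ)) •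
        wtS (rk (⊤ : P) - rk u₀) (Finset.univ.image fun i : Fin k => rk (c i.castSucc) - rk u₀)

open Classical in
/-- The `ab`-index of the interval `[u₀, ⊤]` of `P`: the sum over all chains
`u₀ ≤ C_1 < ⋯ < C_k < C_{k+1} = ⊤` of `wt_C(a,b)`. -/
def psiFrom (rk : P → ℕ) (u₀ : P) : NCPoly :=
  ∑ k ∈ Finset.range (Fintype.card P),
    ∑ c ∈ Finset.univ.filter fun c : Fin (k + 1) → P =>
        StrictMono c ∧ c (Fin.last k) = (⊤ : P) ∧ u₀ ≤ c 0,
      wtS (rk (⊤ : P) - rk u₀) (Finset.univ.image fun i : Fin k => rk (c i.castSucc) - rk u₀)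

/-- `exΨ̃ = ι(exΨ)` for the interval `[u₀, ⊤]`. -/
def exPsiTildeFrom (rk : P → ℕ) (u₀ : P) : NCPoly := iota (exPsiFrom rk u₀)

/-- `Ψ̃ = ι(Ψ)` for the interval `[u₀, ⊤]`. -/
def psiTildeFrom (rk : P → ℕ) (u₀ : P) : NCPoly := iota (psiFrom rk u₀)

open Classical in
/-- The flag `f`-vector `α(S)`: the number of maximal chains of the rank-selected subposet,
i.e. of chains `C_1 < ⋯ < C_k < C_{k+1} = ⊤` with `{rk(C_1), …, rk(C_k)} = S`. -/
def flagAlpha (rk : P → ℕ) (S : Finset ℕ) : ℕ :=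
  ∑ k ∈ Finset.range (Fintype.card P),
    (Finset.univ.filter fun c : Fin (k + 1) → P =>
      StrictMono c ∧ c (Fin.last k) = (⊤ : P) ∧
        (Finset.univ.image fun i : Fin k => rk (c i.castSucc)) = S).card

/-- The flag `h`-vector `β(T) = ∑_{S ⊆ T} (-1)^{|T∖S|} α(S)`. -/
def flagBeta (rk : P → ℕ) (T : Finset ℕ) : ℤ :=
  ∑ S ∈ T.powerset, (-1 : ℤ) ^ (T \ S).card * (flagAlpha rk S : ℤ)

/-- An `R`-labeling of the graded poset `P`: every nontrivial interval `[u,w]` has a unique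
maximal (i.e. saturated) chain with weakly increasing labels. -/
def IsRLabeling (rk : P → ℕ) (lab : P → P → ℤ) : Prop :=
  ∀ u w : P, u < w →
    ∃! c : Fin (rk w - rk u + 1) → P,
      c 0 = u ∧ c (Fin.last (rk w - rk u)) = w ∧
        (∀ i : Fin (rk w - rk u), c i.castSucc ⋖ c i.succ) ∧
        ∀ i j : Fin (rk w - rk u), i ≤ j →
          lab (c i.castSucc) (c i.succ) ≤ lab (c j.castSucc) (c j.succ)

/-- The label sequence `(λ_0, …, λ_n)` of a maximal chain `c` with sign-set `E`:
`λ_0 = 0` and `λ_i = ±λ(c_{i-1}, c_i)`, negative exactly when `i ∈ E`. -/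
def lamSeq {n : ℕ} (lab : P → P → ℤ) (c : Fin (n + 1) → P) (E : Finset ℕ) :
    Fin (n + 1) → ℤ :=
  fun j =>
    if j = 0 then 0
    else (if (j : ℕ) ∈ E then -1 else 1) * lab (c ⟨j.1 - 1, by omega⟩) (c j)

/-- The `ab`-monomial `m(M,E) = m_0 ⋯ m_{n-1}` with `m_i = b` if `λ_i > λ_{i+1}`
and `m_i = a` if `λ_i ≤ λ_{i+1}`. -/
def rlabWord {n : ℕ} (lab : P → P → ℤ) (c : Fin (n + 1) → P) (E : Finset ℕ) :
    FreeMonoid Bool :=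
  FreeMonoid.ofList
    (List.ofFn fun i : Fin n => decide (lamSeq lab c E i.succ < lamSeq lab c E i.castSucc))

end

/-!
Write `A = a - b` and `[n] = ∑_{i < n} (-y)^i`. The map `ω` factors over every cut of a word
that does not split a factor `ab`, hence `ω(f a) = ω(f) (a + yb)`,
`ω(f ab) = ω(f) ((1+y)ab + (y+y²)ba)` and `ω(f b b) = ω(f b) (b + ya)` for all `f`. Expanding
`A^{k+1} = A^k a - A^k b` and `A^{k+1} b = A^k ab - A^k b b` with these rules proves
`ω(A^k) = [k+1] A^k` together with the claimed formula for `ω(A^k b)` by induction on `k`; the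
only identity needed in `ℤ[y]` is `(1+y)[k+1] = 1 - (-y)^{k+1}`.
-/

open MonoidAlgebra

lemma omegaWord_false_cons {w : List Bool} (h : w.head? ≠ some true) :
    omegaWord (false :: w) = (Aa + (X : NCR) • Bb) * omegaWord w := by
  match w, h with
  | [], _ => simp [omegaWord]
  | false :: _, _ => simp [omegaWord]

lemma omegaWord_append {w v : List Bool}
    (h : w.getLast? ≠ some false ∨ v.head? ≠ some true) :
    omegaWord (w ++ v) = omegaWord w * omegaWord v := by
  induction w using omegaWord.induct with
  | case1 => simp [omegaWord]
  | case2 rest ih =>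
    have : rest.getLast? ≠ some false ∨ v.head? ≠ some true := by
      cases rest <;> simp_all [List.getLast?_cons]
    simp [omegaWord, ih this, mul_assoc]
  | case3 rest hrest ih =>
    cases rest with
    | nil => simp_all [omegaWord_false_cons, omegaWord]
    | cons x r =>
      obtain rfl : x = false := by simpa using hrest r
      have : (false :: r).getLast? ≠ some false ∨ v.head? ≠ some true := by
        simpa [List.getLast?_cons] using h
      rw [List.cons_append, omegaWord_false_cons (w := false :: r ++ v) (by simp), ih this,
        omegaWord_false_cons (w := false :: r) (by simp), mul_assoc]
  | case4 rest ih =>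
    have : rest.getLast? ≠ some false ∨ v.head? ≠ some true := by
      cases rest <;> simp_all [List.getLast?_cons]
    simp [omegaWord, ih this, mul_assoc]

noncomputable def omegaLinearMap : NCPoly →ₗ[NCR] NCPoly :=
  Finsupp.linearCombination NCR (fun w : FreeMonoid Bool => omegaWord w.toList) ∘ₗ
    (coeffLinearEquiv NCR).toLinearMap

lemma omegaLinearMap_apply (f : NCPoly) : omegaLinearMap f = omega f := rfl

lemma omega_add (f g : NCPoly) : omega (f + g) = omega f + omega g := by
  simp only [← omegaLinearMap_apply, map_add]

lemma omega_sub (f g : NCPoly) : omega (f - g) = omega f - omega g := by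
  simp only [← omegaLinearMap_apply, map_sub]

lemma omega_single (m : FreeMonoid Bool) (r : NCR) :
    omega (single m r) = r • omegaWord m.toList := by
  simp [← omegaLinearMap_apply, omegaLinearMap]

lemma omega_of (m : FreeMonoid Bool) : omega (of NCR _ m) = omegaWord m.toList := by
  rw [of_apply, omega_single, one_smul]

lemma omega_mul_of_ofList {v₁ v₂ : List Bool} {u : NCPoly}
    (h : ∀ w, omegaWord (w ++ v₂) = omegaWord (w ++ v₁) * u) (f : NCPoly) :
    omega (f * of NCR _ (.ofList v₂)) = omega (f * of NCR _ (.ofList v₁)) * u := by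
  induction f using MonoidAlgebra.induction_linear with
  | zero => simp only [zero_mul, ← omegaLinearMap_apply, map_zero]
  | add f g hf hg => rw [add_mul, add_mul, omega_add, omega_add, hf, hg, add_mul]
  | single m r =>
    rw [of_apply, of_apply, single_mul_single, single_mul_single, omega_single, omega_single,
      FreeMonoid.toList_mul, FreeMonoid.toList_mul, FreeMonoid.toList_ofList,
      FreeMonoid.toList_ofList, h, smul_mul_assoc]

lemma omega_mul_a (f : NCPoly) : omega (f * Aa) = omega f * (Aa + (X : NCR) • Bb) := by
  have h := omega_mul_of_ofList (v₁ := []) (v₂ := [false]) (u := Aa + (X : NCR) • Bb)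
    (fun w => by
      rw [omegaWord_append (Or.inr (by simp)), List.append_nil, omegaWord_false_cons (by simp),
        omegaWord, mul_one]) f
  rwa [FreeMonoid.ofList_nil, map_one, mul_one] at h

lemma omega_mul_a_mul_b (f : NCPoly) :
    omega (f * (Aa * Bb)) =
      omega f * ((1 + X : NCR) • (Aa * Bb) + (X + X ^ 2 : NCR) • (Bb * Aa)) := by
  have h := omega_mul_of_ofList (v₁ := []) (v₂ := [false, true])
    (u := (1 + X : NCR) • (Aa * Bb) + (X + X ^ 2 : NCR) • (Bb * Aa))
    (fun w => by
      rw [omegaWord_append (Or.inr (by simp)), List.append_nil, omegaWord, omegaWord, mul_one]) f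
  rwa [FreeMonoid.ofList_nil, map_one, mul_one, FreeMonoid.ofList_cons, map_mul] at h

lemma omega_mul_b_mul_b (f : NCPoly) :
    omega (f * Bb * Bb) = omega (f * Bb) * (Bb + (X : NCR) • Aa) := by
  have h := omega_mul_of_ofList (v₁ := [true]) (v₂ := [true, true]) (u := Bb + (X : NCR) • Aa)
    (fun w => by
      rw [← List.singleton_append, ← List.append_assoc, omegaWord_append (Or.inl (by simp)),
        omegaWord, omegaWord, mul_one]) f
  rwa [FreeMonoid.ofList_cons, map_mul, ← mul_assoc] at h

lemma omega_one : omega 1 = 1 := by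
  have h := omega_of 1
  rwa [map_one, FreeMonoid.toList_one, omegaWord] at h

lemma omega_b : omega Bb = Bb + (X : NCR) • Aa := by
  rw [Bb, omega_of, FreeMonoid.toList_of, omegaWord, omegaWord, mul_one]; rfl

theorem omega_pow_sub_and_pow_sub_mul_b (k : ℕ) :
    omega ((Aa - Bb) ^ k) = (∑ i ∈ Finset.range (k + 1), (-X : NCR) ^ i) • (Aa - Bb) ^ k ∧
      omega ((Aa - Bb) ^ k * Bb) = (Aa - Bb) ^ k * (Bb - ((-X : NCR) ^ (k + 1)) • Aa) := by
  induction k with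
  | zero => simp [omega_one, omega_b]
  | succ k ih =>
    obtain ⟨hpow, hpow_mul_b⟩ := ih
    set c : NCR := ∑ i ∈ Finset.range (k + 1), (-X) ^ i
    have hgeom : (-X : NCR) ^ (k + 1) = 1 - (1 + X) * c := by
      rw [← sub_neg_eq_add, mul_neg_geom_sum]; ring
    constructor
    · calc omega ((Aa - Bb) ^ (k + 1))
          = omega ((Aa - Bb) ^ k * Aa) - omega ((Aa - Bb) ^ k * Bb) := by
            rw [pow_succ, mul_sub, omega_sub]
        _ = c • (Aa - Bb) ^ k * (Aa + (X : NCR) • Bb)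
              - (Aa - Bb) ^ k * (Bb - (1 - (1 + X) * c) • Aa) := by
            rw [omega_mul_a, hpow, hpow_mul_b, hgeom]
        _ = (c + (1 - (1 + X) * c)) • ((Aa - Bb) ^ k * (Aa - Bb)) := by
            simp only [mul_add, mul_sub, smul_mul_assoc, mul_smul_comm]
            module
        _ = _ := by rw [Finset.sum_range_succ, hgeom, pow_succ]
    · calc omega ((Aa - Bb) ^ (k + 1) * Bb)
          = omega ((Aa - Bb) ^ k * (Aa * Bb)) - omega ((Aa - Bb) ^ k * Bb * Bb) := by
            rw [pow_succ, mul_assoc, sub_mul, mul_sub, mul_assoc]; exact omega_sub _ _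
        _ = c • (Aa - Bb) ^ k * ((1 + X : NCR) • (Aa * Bb) + (X + X ^ 2 : NCR) • (Bb * Aa))
              - (Aa - Bb) ^ k * (Bb - (1 - (1 + X) * c) • Aa) * (Bb + (X : NCR) • Aa) := by
            rw [omega_mul_a_mul_b, omega_mul_b_mul_b, hpow, hpow_mul_b, hgeom]
        _ = (Aa - Bb) ^ k * (Aa - Bb) * (Bb - (-X * (1 - (1 + X) * c)) • Aa) := by
            simp only [mul_add, mul_sub, sub_mul, add_mul, smul_mul_assoc, mul_smul_comm,
              mul_assoc]
            module
        _ = _ := by rw [pow_succ (-X : NCR), hgeom, pow_succ, mul_comm (1 - _)]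

/-- `ω((a-b)^k·b) = (a-b)^k·(b - (-y)^{k+1}·a)` in `ℤ[y]⟨a,b⟩`. -/
theorem omega_pow_sub_mul_b (k : ℕ) :
    omega ((Aa - Bb) ^ k * Bb) =
      (Aa - Bb) ^ k * (Bb - ((-X : Polynomial ℤ) ^ (k + 1)) • Aa) :=
  (omega_pow_sub_and_pow_sub_mul_b k).2
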